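/- arXiv:2311.00708 — 2 statements merged into one kernel-verified Lean document; each statement's English description precedes it below -/
import Mathlib

section
/- The functions φ_+ and φ_- satisfy, for every x ∈ ℝ, √(v₀/v₁) e^{-max(√v₀ x, √v₁ x)} ≤ φ_+(x) ≤ √(v₁/v₀) e^{-min(√v₀ x, √v₁ x)} and √(v₀/v₁) e^{min(√v₀ x, √v₁ x)} ≤ φ_-(x) ≤ √(v₁/v₀) e^{max(√v₀ x, √v₁ x)}. -/
open MeasureTheory Real Set Filter

noncomputable section

/-- `u ∈ H¹(ℝ)` with distributional derivative `u'`: `u` is (the continuous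
representative and is) continuous, `u, u' ∈ L²(ℝ)`, and `u` is a primitive of `u'`. -/
def MemH1 (u u' : ℝ → ℝ) : Prop :=
  Continuous u ∧ MemLp u 2 volume ∧ MemLp u' 2 volume ∧
    ∀ x : ℝ, u x = u 0 + ∫ t in (0:ℝ)..x, u' t

/-- The squared norm `‖u‖_V² = ∫ (|u'|² + V |u|²)`. -/
def IV (V u u' : ℝ → ℝ) : ℝ := ∫ x : ℝ, (u' x ^ 2 + V x * u x ^ 2)

/-- The sup norm `‖u‖_{L^∞(ℝ)}` of a (bounded continuous) function. -/
def supNorm (u : ℝ → ℝ) : ℝ := ⨆ x : ℝ, |u x|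

/-- Membership in `K_a = {u ∈ H¹(ℝ) : u(a) = ‖u‖_∞ = 1}` (with derivative datum `u'`). -/
def InK (a : ℝ) (u u' : ℝ → ℝ) : Prop :=
  MemH1 u u' ∧ u a = 1 ∧ ∀ x : ℝ, |u x| ≤ 1

/-- `F(a) = inf_{u ∈ K_a} ‖u‖_V²`. -/
def FV (V : ℝ → ℝ) (a : ℝ) : ℝ :=
  sInf { r : ℝ | ∃ u u' : ℝ → ℝ, InK a u u' ∧ r = IV V u u' }

/-- `m(V) = inf { ‖u‖_V²/‖u‖_∞² : u ∈ H¹(ℝ), u ≢ 0 }`. -/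
def mV (V : ℝ → ℝ) : ℝ :=
  sInf { r : ℝ | ∃ u u' : ℝ → ℝ, MemH1 u u' ∧ u ≠ 0 ∧ r = IV V u u' / supNorm u ^ 2 }

/-- `u` (with derivative datum `u'`) minimizes `‖·‖_V²` over `K_a`. -/
def IsMinimizer (V : ℝ → ℝ) (a : ℝ) (u u' : ℝ → ℝ) : Prop :=
  InK a u u' ∧ ∀ v v' : ℝ → ℝ, InK a v v' → IV V u u' ≤ IV V v v'

/-- `φ` is a `W^{2,∞}_loc` solution of `φ'' = Vφ` with `φ(0) = 1` and `φ(x) → 0` as `x → +∞`: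
`φ` is differentiable with locally Lipschitz derivative and `(φ')' = Vφ` a.e. -/
def SolP (V φ : ℝ → ℝ) : Prop :=
  (∀ x : ℝ, DifferentiableAt ℝ φ x) ∧ LocallyLipschitz (deriv φ) ∧
    (∀ᵐ x : ℝ ∂volume, HasDerivAt (deriv φ) (V x * φ x) x) ∧
    φ 0 = 1 ∧ Tendsto φ atTop (nhds 0)

/-- `φ` is a `W^{2,∞}_loc` solution of `φ'' = Vφ` with `φ(0) = 1` and `φ(x) → 0` as `x → −∞`. -/
def SolM (V φ : ℝ → ℝ) : Prop :=
  (∀ x : ℝ, DifferentiableAt ℝ φ x) ∧ LocallyLipschitz (deriv φ) ∧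
    (∀ᵐ x : ℝ ∂volume, HasDerivAt (deriv φ) (V x * φ x) x) ∧
    φ 0 = 1 ∧ Tendsto φ atBot (nhds 0)

open Topology

/-! The bounds say that the logarithmic derivative `φ'/φ` of `φ₊` stays in `[-√v₁, -√v₀]`
(they even hold without the factors `√(v₀/v₁)`, `√(v₁/v₀)`). Since `(φφ')' = φ'² + Vφ² ≥ 0`,
`φ²` is convex; tending to `0`, it is nonincreasing, i.e. `φφ' ≤ 0`. A zero of `φ` would force
`φ ≡ 0` beyond it, and Gronwall's inequality for `φ² + φ'²` would carry `(φ, φ') = 0` back to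
`x = 0`; hence `φ > 0`, `φ' ≤ 0`, and `φ'` increases to `0`. The energies `φ'² - wφ²` have
derivative `2(V - w)φφ'`: for `w = v₁` the energy increases to `0`, for `w = v₀` it decreases
to `0`, whence `v₀φ² ≤ φ'² ≤ v₁φ²`. Reflecting `x ↦ -x` turns `φ₋` into a `φ₊`. -/

theorem LocallyLipschitz.monotone_of_ae_deriv_nonneg {f : ℝ → ℝ} (hf : LocallyLipschitz f)
    (hf' : ∀ᵐ x, 0 ≤ deriv f x) : Monotone f := by
  intro a b hab
  obtain ⟨K, hK⟩ :=
    hf.locallyLipschitzOn.exists_lipschitzOnWith_of_compact (isCompact_uIcc (a := a) (b := b))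
  have hint : 0 ≤ ∫ x in a..b, deriv f x := intervalIntegral.integral_nonneg_of_ae hab hf'
  rw [hK.absolutelyContinuousOnInterval.integral_deriv_eq_sub] at hint
  linarith

theorem LocallyLipschitz.antitone_of_ae_deriv_nonpos {f : ℝ → ℝ} (hf : LocallyLipschitz f)
    (hf' : ∀ᵐ x, deriv f x ≤ 0) : Antitone f := by
  have hneg : Monotone (-f) := hf.neg.monotone_of_ae_deriv_nonneg <| by
    filter_upwards [hf'] with x hx
    rw [deriv.neg]
    linarith
  exact fun a b hab => neg_le_neg_iff.1 (hneg hab)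

theorem monotone_mul_exp_of_neg_mul_le_deriv {f : ℝ → ℝ} {c : ℝ} (hf : Differentiable ℝ f)
    (h : ∀ x, -c * f x ≤ deriv f x) : Monotone fun x => f x * exp (c * x) := by
  refine monotone_of_deriv_nonneg (by fun_prop) fun x => ?_
  have hd : HasDerivAt (fun x => f x * exp (c * x)) ((deriv f x + c * f x) * exp (c * x)) x := by
    have he : HasDerivAt (fun x => exp (c * x)) (exp (c * x) * c) x := by
      simpa using ((hasDerivAt_id x).const_mul c).exp
    exact ((hf x).hasDerivAt.fun_mul he).congr_deriv (by ring)
  rw [hd.deriv]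
  exact mul_nonneg (by linarith [h x]) (exp_pos _).le

theorem antitone_mul_exp_of_deriv_le_neg_mul {f : ℝ → ℝ} {c : ℝ} (hf : Differentiable ℝ f)
    (h : ∀ x, deriv f x ≤ -c * f x) : Antitone fun x => f x * exp (c * x) := by
  have := monotone_mul_exp_of_neg_mul_le_deriv (f := -f) (c := c) hf.neg
    fun x => by rw [deriv.neg]; simp only [Pi.neg_apply]; linarith [h x]
  exact fun a b hab => by simpa using this hab

theorem exp_bounds_of_monotone_of_antitone {f : ℝ → ℝ} {a b : ℝ} (hf0 : f 0 = 1)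
    (hb : Monotone fun x => f x * exp (b * x)) (ha : Antitone fun x => f x * exp (a * x)) (x : ℝ) :
    exp (-max (a * x) (b * x)) ≤ f x ∧ f x ≤ exp (-min (a * x) (b * x)) := by
  have key : ∀ c, (1 ≤ f x * exp (c * x) → exp (-(c * x)) ≤ f x) ∧
      (f x * exp (c * x) ≤ 1 → f x ≤ exp (-(c * x))) := fun c => by
    rw [exp_neg, inv_eq_one_div, div_le_iff₀ (exp_pos _), le_div_iff₀ (exp_pos _)]
    exact ⟨id, id⟩
  have h0 : ∀ c : ℝ, f 0 * exp (c * 0) = 1 := by simp [hf0]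
  rcases le_total 0 x with hx | hx
  · exact ⟨(exp_le_exp.2 (neg_le_neg (le_max_right _ _))).trans ((key b).1 (h0 b ▸ hb hx)),
      ((key a).2 (h0 a ▸ ha hx)).trans (exp_le_exp.2 (neg_le_neg (min_le_left _ _)))⟩
  · exact ⟨(exp_le_exp.2 (neg_le_neg (le_max_left _ _))).trans ((key a).1 (h0 a ▸ ha hx)),
      ((key b).2 (h0 b ▸ hb hx)).trans (exp_le_exp.2 (neg_le_neg (min_le_right _ _)))⟩

/-- `φ ∈ W^{2,∞}_loc(ℝ)` solves `φ'' = V φ` almost everywhere. -/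
structure IsStrongSolution (V φ : ℝ → ℝ) : Prop where
  differentiable : Differentiable ℝ φ
  locallyLipschitz_deriv : LocallyLipschitz (deriv φ)
  ae_hasDerivAt_deriv : ∀ᵐ x, HasDerivAt (deriv φ) (V x * φ x) x

namespace IsStrongSolution

variable {V φ : ℝ → ℝ} {v0 v1 : ℝ}

theorem locallyLipschitz (h : IsStrongSolution V φ) : LocallyLipschitz φ :=
  (contDiff_one_iff_deriv.2 ⟨h.differentiable, h.locallyLipschitz_deriv.continuous⟩)
    |>.locallyLipschitz

theorem locallyLipschitz_comp (h : IsStrongSolution V φ) {F : ℝ × ℝ × ℝ → ℝ}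
    (hF : ContDiff ℝ 1 F) : LocallyLipschitz fun x => F (x, φ x, deriv φ x) :=
  hF.locallyLipschitz.comp <|
    LocallyLipschitz.id.prodMk (h.locallyLipschitz.prodMk h.locallyLipschitz_deriv)

theorem comp_neg (h : IsStrongSolution V φ) :
    IsStrongSolution (fun x => V (-x)) (fun x => φ (-x)) := by
  have hderiv : deriv (fun x => φ (-x)) = fun x => -deriv φ (-x) :=
    funext fun x => deriv_comp_neg φ x
  refine ⟨h.differentiable.comp differentiable_neg, ?_, ?_⟩
  · rw [hderiv]
    exact (h.locallyLipschitz_deriv.comp LipschitzWith.id.neg.locallyLipschitz).neg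
  · filter_upwards [(Measure.measurePreserving_neg volume).quasiMeasurePreserving.ae
      h.ae_hasDerivAt_deriv] with x hx
    rw [hderiv]
    exact (hx.comp x (hasDerivAt_neg x)).neg.congr_deriv (by ring)

theorem monotone_sq_add_sq_deriv_mul_exp (h : IsStrongSolution V φ)
    (hV : ∀ᵐ x, 0 ≤ V x ∧ V x ≤ v1) :
    Monotone fun x => (φ x ^ 2 + deriv φ x ^ 2) * exp ((v1 + 1) * x) := by
  refine (h.locallyLipschitz_comp (F := fun p => (p.2.1 ^ 2 + p.2.2 ^ 2) * exp ((v1 + 1) * p.1))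
    (by fun_prop)).monotone_of_ae_deriv_nonneg ?_
  filter_upwards [h.ae_hasDerivAt_deriv, hV] with x hψ hVx
  have hφ := (h.differentiable x).hasDerivAt
  have he : HasDerivAt (fun x => exp ((v1 + 1) * x)) (exp ((v1 + 1) * x) * (v1 + 1)) x := by
    simpa using ((hasDerivAt_id x).const_mul (v1 + 1)).exp
  have key : 0 ≤ 2 * (1 + V x) * (φ x * deriv φ x) + (v1 + 1) * (φ x ^ 2 + deriv φ x ^ 2) := by
    nlinarith [mul_nonneg (by linarith : 0 ≤ 1 + V x) (sq_nonneg (φ x + deriv φ x)),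
      mul_nonneg (sub_nonneg.2 hVx.2) (add_nonneg (sq_nonneg (φ x)) (sq_nonneg (deriv φ x)))]
  have hd : HasDerivAt (fun x => (φ x ^ 2 + deriv φ x ^ 2) * exp ((v1 + 1) * x))
      (exp ((v1 + 1) * x) *
        (2 * (1 + V x) * (φ x * deriv φ x) + (v1 + 1) * (φ x ^ 2 + deriv φ x ^ 2))) x :=
    (((hφ.fun_pow 2).fun_add (hψ.fun_pow 2)).fun_mul he).congr_deriv (by norm_num; ring)
  rw [hd.deriv]
  exact mul_nonneg (exp_pos _).le key

theorem monotone_mul_deriv (h : IsStrongSolution V φ) (hV : ∀ᵐ x, 0 ≤ V x) :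
    Monotone fun x => φ x * deriv φ x := by
  refine (h.locallyLipschitz_comp (F := fun p => p.2.1 * p.2.2)
    (by fun_prop)).monotone_of_ae_deriv_nonneg ?_
  filter_upwards [h.ae_hasDerivAt_deriv, hV] with x hψ hVx
  have hd := ((h.differentiable x).hasDerivAt.fun_mul hψ)
  rw [hd.deriv]
  nlinarith [mul_nonneg hVx (sq_nonneg (φ x)), sq_nonneg (deriv φ x)]

/-- `φ²` is convex and tends to `0`, hence is nonincreasing. -/
theorem mul_deriv_nonpos (h : IsStrongSolution V φ) (hV : ∀ᵐ x, 0 ≤ V x)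
    (hlim : Tendsto φ atTop (𝓝 0)) (a : ℝ) : φ a * deriv φ a ≤ 0 := by
  by_contra! hc
  set c := φ a * deriv φ a
  have hgrowth : MonotoneOn (fun x => φ x ^ 2 - 2 * c * x) (Ici a) := by
    have hd : ∀ x, HasDerivAt (fun x => φ x ^ 2 - 2 * c * x) (2 * (φ x * deriv φ x) - 2 * c) x :=
      fun x => (((h.differentiable x).hasDerivAt.fun_pow 2).fun_sub
        ((hasDerivAt_id x).const_mul (2 * c))).congr_deriv (by norm_num; ring)
    refine monotoneOn_of_deriv_nonneg (convex_Ici a)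
      (fun x _ => (hd x).continuousAt.continuousWithinAt)
      (fun x _ => (hd x).differentiableAt.differentiableWithinAt) fun x hx => ?_
    rw [interior_Ici] at hx
    rw [(hd x).deriv]
    linarith [h.monotone_mul_deriv hV (le_of_lt hx)]
  obtain ⟨x, hxsmall, hxa⟩ :=
    ((hlim.pow 2).eventually (gt_mem_nhds (by linarith : (0:ℝ) ^ 2 < 2 * c))
      |>.and (eventually_ge_atTop (a + 1))).exists
  have := hgrowth self_mem_Ici (show x ∈ Ici a by simp only [mem_Ici]; linarith) (by linarith)
  nlinarith [sq_nonneg (φ a)]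

theorem antitone_sq (h : IsStrongSolution V φ) (hV : ∀ᵐ x, 0 ≤ V x)
    (hlim : Tendsto φ atTop (𝓝 0)) : Antitone fun x => φ x ^ 2 := by
  have hd : ∀ x, HasDerivAt (fun x => φ x ^ 2) (2 * (φ x * deriv φ x)) x :=
    fun x => ((h.differentiable x).hasDerivAt.fun_pow 2).congr_deriv (by norm_num; ring)
  refine antitone_of_deriv_nonpos (fun x => (hd x).differentiableAt) fun x => ?_
  rw [(hd x).deriv]
  linarith [h.mul_deriv_nonpos hV hlim x]

theorem pos (h : IsStrongSolution V φ) (hV : ∀ᵐ x, 0 ≤ V x ∧ V x ≤ v1)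
    (hlim : Tendsto φ atTop (𝓝 0)) (hφ0 : 0 < φ 0) (x : ℝ) : 0 < φ x := by
  have hV0 : ∀ᵐ x, 0 ≤ V x := hV.mono fun _ hx => hx.1
  have hne : ∀ a, φ a ≠ 0 := by
    intro a ha
    have hzero : ∀ y ∈ Ioi a, φ y = 0 := fun y hy =>
      pow_eq_zero_iff two_ne_zero |>.1 <|
        le_antisymm (by simpa [ha] using h.antitone_sq hV0 hlim hy.le) (sq_nonneg _)
    set b := max a 0 + 1
    have hb : b ∈ Ioi a := by simp only [mem_Ioi, b]; linarith [le_max_left a 0]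
    have hderiv : deriv φ b = 0 := by
      rw [EventuallyEq.deriv_eq (f := fun _ => (0:ℝ))
        (eventually_of_mem (isOpen_Ioi.mem_nhds hb) hzero)]
      simp
    have := h.monotone_sq_add_sq_deriv_mul_exp hV
      (show 0 ≤ b by simp only [b]; linarith [le_max_right a 0])
    simp only [hzero b hb, hderiv, mul_zero, exp_zero, mul_one] at this
    nlinarith [sq_nonneg (deriv φ 0)]
  by_contra! hx
  obtain ⟨y, -, hy⟩ := intermediate_value_uIcc (h.differentiable.continuous.continuousOn)
    (show (0:ℝ) ∈ uIcc (φ x) (φ 0) from ⟨min_le_of_left_le hx, le_max_of_le_right hφ0.le⟩)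
  exact hne y hy

theorem tendsto_deriv (h : IsStrongSolution V φ) (hV : ∀ᵐ x, 0 ≤ V x)
    (hlim : Tendsto φ atTop (𝓝 0)) (hpos : ∀ x, 0 < φ x) : Tendsto (deriv φ) atTop (𝓝 0) := by
  have hmono : Monotone (deriv φ) := by
    refine h.locallyLipschitz_deriv.monotone_of_ae_deriv_nonneg ?_
    filter_upwards [h.ae_hasDerivAt_deriv, hV] with x hψ hVx
    rw [hψ.deriv]
    exact mul_nonneg hVx (hpos x).le
  have hnonpos : ∀ x, deriv φ x ≤ 0 := fun x =>
    nonpos_of_mul_nonpos_right (h.mul_deriv_nonpos hV hlim x) (hpos x)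
  have hbdd : BddAbove (range (deriv φ)) := ⟨0, by rintro _ ⟨x, rfl⟩; exact hnonpos x⟩
  have hsup := tendsto_atTop_ciSup hmono hbdd
  set L := ⨆ x, deriv φ x
  suffices hL : L = 0 by rwa [hL] at hsup
  refine le_antisymm (ciSup_le hnonpos) (not_lt.1 fun hL => ?_)
  -- with `φ' ≤ L < 0`, `φ` would become negative at `φ 0 / (-L)`
  have hlin : Antitone fun x => φ x - L * x := by
    have hd : ∀ x, HasDerivAt (fun x => φ x - L * x) (deriv φ x - L) x := fun x =>
      ((h.differentiable x).hasDerivAt.fun_sub ((hasDerivAt_id x).const_mul L)).congr_deriv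
        (by ring)
    refine antitone_of_deriv_nonpos (fun x => (hd x).differentiableAt) fun x => ?_
    rw [(hd x).deriv]
    linarith [le_ciSup hbdd x]
  have := hlin (div_nonneg (hpos 0).le (neg_nonneg.2 hL.le))
  have hcancel : L * (φ 0 / -L) = -φ 0 := by field_simp [hL.ne]
  simp only [hcancel, mul_zero] at this
  linarith [hpos (φ 0 / -L)]

theorem ae_hasDerivAt_energy (h : IsStrongSolution V φ) (w : ℝ) :
    ∀ᵐ x, HasDerivAt (fun x => deriv φ x ^ 2 - w * φ x ^ 2)
      (2 * (V x - w) * (φ x * deriv φ x)) x := by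
  filter_upwards [h.ae_hasDerivAt_deriv] with x hψ
  have hφ := (h.differentiable x).hasDerivAt
  exact ((hψ.fun_pow 2).fun_sub ((hφ.fun_pow 2).const_mul w)).congr_deriv (by norm_num; ring)

theorem tendsto_energy (hlim : Tendsto φ atTop (𝓝 0)) (hlim' : Tendsto (deriv φ) atTop (𝓝 0))
    (w : ℝ) : Tendsto (fun x => deriv φ x ^ 2 - w * φ x ^ 2) atTop (𝓝 0) := by
  simpa using (hlim'.pow 2).sub ((hlim.pow 2).const_mul w)

theorem sq_deriv_le (h : IsStrongSolution V φ) (hV : ∀ᵐ x, V x ≤ v1)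
    (hφψ : ∀ x, φ x * deriv φ x ≤ 0) (hlim : Tendsto φ atTop (𝓝 0))
    (hlim' : Tendsto (deriv φ) atTop (𝓝 0)) (x : ℝ) : deriv φ x ^ 2 ≤ v1 * φ x ^ 2 := by
  have hmono : Monotone fun x => deriv φ x ^ 2 - v1 * φ x ^ 2 := by
    refine (h.locallyLipschitz_comp (F := fun p => p.2.2 ^ 2 - v1 * p.2.1 ^ 2)
      (by fun_prop)).monotone_of_ae_deriv_nonneg ?_
    filter_upwards [h.ae_hasDerivAt_energy v1, hV] with y hy hVy
    rw [hy.deriv]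
    nlinarith [hφψ y]
  linarith [hmono.ge_of_tendsto (tendsto_energy hlim hlim' v1) x]

theorem le_sq_deriv (h : IsStrongSolution V φ) (hV : ∀ᵐ x, v0 ≤ V x)
    (hφψ : ∀ x, φ x * deriv φ x ≤ 0) (hlim : Tendsto φ atTop (𝓝 0))
    (hlim' : Tendsto (deriv φ) atTop (𝓝 0)) (x : ℝ) : v0 * φ x ^ 2 ≤ deriv φ x ^ 2 := by
  have hanti : Antitone fun x => deriv φ x ^ 2 - v0 * φ x ^ 2 := by
    refine (h.locallyLipschitz_comp (F := fun p => p.2.2 ^ 2 - v0 * p.2.1 ^ 2)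
      (by fun_prop)).antitone_of_ae_deriv_nonpos ?_
    filter_upwards [h.ae_hasDerivAt_energy v0, hV] with y hy hVy
    rw [hy.deriv]
    nlinarith [hφψ y]
  linarith [hanti.le_of_tendsto (tendsto_energy hlim hlim' v0) x]

theorem exp_bounds (h : IsStrongSolution V φ) (hV : ∀ᵐ x, v0 ≤ V x ∧ V x ≤ v1) (h0 : 0 ≤ v0)
    (hφ0 : φ 0 = 1) (hlim : Tendsto φ atTop (𝓝 0)) (x : ℝ) :
    exp (-max (√v0 * x) (√v1 * x)) ≤ φ x ∧ φ x ≤ exp (-min (√v0 * x) (√v1 * x)) := by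
  have hV0 : ∀ᵐ x, 0 ≤ V x ∧ V x ≤ v1 := hV.mono fun _ hx => ⟨h0.trans hx.1, hx.2⟩
  have hVnn : ∀ᵐ x, 0 ≤ V x := hV0.mono fun _ hx => hx.1
  have hv1 : 0 ≤ v1 := by obtain ⟨y, hy⟩ := hV0.exists; exact hy.1.trans hy.2
  have hpos := h.pos hV0 hlim (hφ0 ▸ one_pos)
  have hφψ := h.mul_deriv_nonpos hVnn hlim
  have hlim' := h.tendsto_deriv hVnn hlim hpos
  have hlower : ∀ y, -√v1 * φ y ≤ deriv φ y := fun y => by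
    have hsq := h.sq_deriv_le (hV.mono fun _ hx => hx.2) hφψ hlim hlim' y
    rw [← sq_sqrt hv1, ← mul_pow] at hsq
    simpa using (abs_le_of_sq_le_sq' hsq (mul_nonneg (sqrt_nonneg _) (hpos y).le)).1
  have hupper : ∀ y, deriv φ y ≤ -√v0 * φ y := fun y => by
    have hsq := h.le_sq_deriv (hV.mono fun _ hx => hx.1) hφψ hlim hlim' y
    rw [← sq_sqrt h0, ← mul_pow, ← neg_sq (deriv φ y)] at hsq
    have hψ : deriv φ y ≤ 0 := nonpos_of_mul_nonpos_right (hφψ y) (hpos y)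
    linarith [(sq_le_sq₀ (mul_nonneg (sqrt_nonneg _) (hpos y).le) (neg_nonneg.2 hψ)).1 hsq]
  exact exp_bounds_of_monotone_of_antitone hφ0
    (monotone_mul_exp_of_neg_mul_le_deriv h.differentiable hlower)
    (antitone_mul_exp_of_deriv_le_neg_mul h.differentiable hupper) x

theorem exp_bounds_of_tendsto_atBot (h : IsStrongSolution V φ)
    (hV : ∀ᵐ x, v0 ≤ V x ∧ V x ≤ v1) (h0 : 0 ≤ v0) (hφ0 : φ 0 = 1)
    (hlim : Tendsto φ atBot (𝓝 0)) (x : ℝ) :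
    exp (min (√v0 * x) (√v1 * x)) ≤ φ x ∧ φ x ≤ exp (max (√v0 * x) (√v1 * x)) := by
  have := h.comp_neg.exp_bounds
    ((Measure.measurePreserving_neg volume).quasiMeasurePreserving.ae hV) h0 (by simpa using hφ0)
    (hlim.comp tendsto_neg_atTop_atBot) (-x)
  simpa only [mul_neg, max_neg_neg, min_neg_neg, neg_neg] using this

end IsStrongSolution

theorem stmt10_general (V : ℝ → ℝ) (v0 v1 : ℝ) (h0 : 0 < v0)
    (hbd : ∀ᵐ x : ℝ ∂volume, v0 ≤ V x ∧ V x ≤ v1)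
    (φp φm : ℝ → ℝ) (hp : SolP V φp) (hm : SolM V φm) :
    ∀ x : ℝ,
      (Real.sqrt (v0 / v1) * Real.exp (-(max (Real.sqrt v0 * x) (Real.sqrt v1 * x))) ≤ φp x ∧
        φp x ≤ Real.sqrt (v1 / v0) * Real.exp (-(min (Real.sqrt v0 * x) (Real.sqrt v1 * x)))) ∧
      (Real.sqrt (v0 / v1) * Real.exp (min (Real.sqrt v0 * x) (Real.sqrt v1 * x)) ≤ φm x ∧
        φm x ≤ Real.sqrt (v1 / v0) * Real.exp (max (Real.sqrt v0 * x) (Real.sqrt v1 * x))) := by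
  obtain ⟨hpd, hpψ, hpode, hp0, hplim⟩ := hp
  obtain ⟨hmd, hmψ, hmode, hm0, hmlim⟩ := hm
  have hv : v0 ≤ v1 := by obtain ⟨y, hy⟩ := hbd.exists; exact hy.1.trans hy.2
  have hsmall : √(v0 / v1) ≤ 1 := sqrt_le_one.2 (div_le_one_of_le₀ hv (h0.le.trans hv))
  have hlarge : 1 ≤ √(v1 / v0) := one_le_sqrt.2 ((one_le_div₀ h0).2 hv)
  intro x
  obtain ⟨hpl, hpu⟩ := IsStrongSolution.exp_bounds ⟨hpd, hpψ, hpode⟩ hbd h0.le hp0 hplim x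
  obtain ⟨hml, hmu⟩ :=
    IsStrongSolution.exp_bounds_of_tendsto_atBot ⟨hmd, hmψ, hmode⟩ hbd h0.le hm0 hmlim x
  exact ⟨⟨(mul_le_of_le_one_left (exp_pos _).le hsmall).trans hpl,
      hpu.trans (le_mul_of_one_le_left (exp_pos _).le hlarge)⟩,
    ⟨(mul_le_of_le_one_left (exp_pos _).le hsmall).trans hml,
      hmu.trans (le_mul_of_one_le_left (exp_pos _).le hlarge)⟩⟩

/-- two-sided exponential estimates for the fundamental solutions `φ₊, φ₋`. -/
theorem stmt10 (V : ℝ → ℝ) (v0 v1 : ℝ) (hmeas : Measurable V) (h0 : 0 < v0)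
    (hbd : ∀ᵐ x : ℝ ∂volume, v0 ≤ V x ∧ V x ≤ v1)
    (φp φm : ℝ → ℝ) (hp : SolP V φp) (hm : SolM V φm) :
    ∀ x : ℝ,
      (Real.sqrt (v0 / v1) * Real.exp (-(max (Real.sqrt v0 * x) (Real.sqrt v1 * x))) ≤ φp x ∧
        φp x ≤ Real.sqrt (v1 / v0) * Real.exp (-(min (Real.sqrt v0 * x) (Real.sqrt v1 * x)))) ∧
      (Real.sqrt (v0 / v1) * Real.exp (min (Real.sqrt v0 * x) (Real.sqrt v1 * x)) ≤ φm x ∧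
        φm x ≤ Real.sqrt (v1 / v0) * Real.exp (max (Real.sqrt v0 * x) (Real.sqrt v1 * x))) :=
  stmt10_general V v0 v1 h0 hbd φp φm hp hm
end
end

section
/- The Wronskian x ↦ φ_+(x)φ_-'(x) − φ_+'(x)φ_-(x) is constant on ℝ, equal to W := φ_-'(0) − φ_+'(0) > 0, and the fundamental solutions are linked by φ_-(x) = W φ_+(x) H_+(x) and φ_+(x) = W φ_-(x) H_-(x) for every x ∈ ℝ, where H_+(x) := ∫_{-∞}^x φ_+(ξ)^{-2} dξ and H_-(x) := ∫_x^{∞} φ_-(ξ)^{-2} dξ (both integrals converge). -/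
open MeasureTheory Real Set Filter

noncomputable section

/-!
A solution vanishing at `z` is identically zero: `φ φ'` has derivative `φ'² + V φ² ≥ 0`, so it is
nonnegative on `[z, ∞)`; hence `φ²` increases there towards its limit `0`, so `φ` vanishes on
`[z, ∞)`, the energy `φ'² + φ²` vanishes at a point, and Grönwall's inequality kills it everywhere.
Thus `φ₊, φ₋ > 0` by the intermediate value theorem, so both are convex, `φ₊` decreases and `φ₋`
increases. The Wronskian has derivative `0` a.e., so it is the constant `W`, and
`(φ₊ / φ₋)' = -W / φ₋²`. Integrating over `(x, ∞)`, where `φ₊ / φ₋ ≤ φ₊ → 0`, gives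
`φ₊ = W φ₋ H₋`, and `x = 0` shows `W > 0`. The identity `φ₋ = W φ₊ H₊` is the same statement for
the reflected pair `x ↦ φ∓(-x)`.
-/

open Topology

theorem LocallyLipschitz.absolutelyContinuousOnInterval {f : ℝ → ℝ} (hf : LocallyLipschitz f)
    (a b : ℝ) : AbsolutelyContinuousOnInterval f a b := by
  obtain ⟨K, hK⟩ := hf.locallyLipschitzOn.exists_lipschitzOnWith_of_compact isCompact_uIcc
  exact hK.absolutelyContinuousOnInterval

theorem ContDiff.absolutelyContinuousOnInterval {f : ℝ → ℝ} (hf : ContDiff ℝ 1 f) (a b : ℝ) :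
    AbsolutelyContinuousOnInterval f a b :=
  hf.contDiffOn.absolutelyContinuousOnInterval

theorem monotone_of_ae_hasDerivAt_nonneg {f f' : ℝ → ℝ}
    (hf : ∀ a b, AbsolutelyContinuousOnInterval f a b) (hderiv : ∀ᵐ x, HasDerivAt f (f' x) x)
    (hnonneg : ∀ᵐ x, 0 ≤ f' x) : Monotone f := by
  intro a b hab
  have hderiv_nonneg : 0 ≤ᵐ[volume] deriv f := by
    filter_upwards [hderiv, hnonneg] with x hx hx' using hx.deriv ▸ hx'
  have := intervalIntegral.integral_nonneg_of_ae hab hderiv_nonneg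
  rw [(hf a b).integral_deriv_eq_sub] at this
  linarith

theorem antitone_of_ae_hasDerivAt_nonpos {f f' : ℝ → ℝ}
    (hf : ∀ a b, AbsolutelyContinuousOnInterval f a b) (hderiv : ∀ᵐ x, HasDerivAt f (f' x) x)
    (hnonpos : ∀ᵐ x, f' x ≤ 0) : Antitone f := by
  have := monotone_of_ae_hasDerivAt_nonneg (f := -f) (f' := -f') (fun a b => (hf a b).neg)
    (hderiv.mono fun x hx => hx.neg) (hnonpos.mono fun x hx => neg_nonneg.2 hx)
  exact fun a b hab => neg_le_neg_iff.1 (this hab)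

/-- Grönwall: `exp (-L x) F x` decreases and `exp (L x) F x` increases. -/
theorem eq_zero_of_ae_abs_hasDerivAt_le {F F' : ℝ → ℝ} {L z : ℝ}
    (hF : ∀ a b, AbsolutelyContinuousOnInterval F a b) (hderiv : ∀ᵐ x, HasDerivAt F (F' x) x)
    (hbound : ∀ᵐ x, |F' x| ≤ L * F x) (hnonneg : ∀ x, 0 ≤ F x) (hz : F z = 0) (x : ℝ) :
    F x = 0 := by
  have hexp (c a b : ℝ) : AbsolutelyContinuousOnInterval (fun x => exp (c * x)) a b :=
    ContDiff.absolutelyContinuousOnInterval (by fun_prop) a b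
  have hderiv_exp (c : ℝ) : ∀ᵐ x, HasDerivAt (fun x => exp (c * x) * F x)
      (exp (c * x) * (c * F x + F' x)) x := by
    filter_upwards [hderiv] with x hx
    exact (((hasDerivAt_id' x).const_mul c).exp.fun_mul hx).congr_deriv (by ring)
  refine le_antisymm ?_ (hnonneg x)
  rcases le_total z x with hzx | hxz
  · have hanti := antitone_of_ae_hasDerivAt_nonpos (fun a b => (hexp (-L) a b).mul (hF a b))
      (hderiv_exp (-L)) (by
        filter_upwards [hbound] with y hy
        exact mul_nonpos_of_nonneg_of_nonpos (exp_pos _).le (by linarith [le_abs_self (F' y)]))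
    have := hanti hzx
    simp only [Pi.mul_apply, hz, mul_zero] at this
    exact nonpos_of_mul_nonpos_right this (exp_pos _)
  · have hmono := monotone_of_ae_hasDerivAt_nonneg (fun a b => (hexp L a b).mul (hF a b))
      (hderiv_exp L) (by
        filter_upwards [hbound] with y hy
        exact mul_nonneg (exp_pos _).le (by linarith [neg_abs_le (F' y)]))
    have := hmono hxz
    simp only [Pi.mul_apply, hz, mul_zero] at this
    exact nonpos_of_mul_nonpos_right this (exp_pos _)

theorem deriv_nonpos_of_monotone_deriv_of_tendsto {f : ℝ → ℝ} {l : ℝ} (hf : Differentiable ℝ f)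
    (hf' : Monotone (deriv f)) (hlim : Tendsto f atTop (𝓝 l)) (x : ℝ) : deriv f x ≤ 0 := by
  by_contra! hpos
  have hlinear : ∀ y ∈ Ici x, deriv f x * (y - x) ≤ f y - f x := fun y hy =>
    (convex_Ici x).mul_sub_le_image_sub_of_le_deriv hf.continuous.continuousOn
      hf.differentiableOn (fun t ht => hf' (interior_subset ht)) x self_mem_Ici y hy hy
  have : Tendsto f atTop atTop := by
    refine tendsto_atTop_mono' _ (eventually_ge_atTop x |>.mono fun y hy => ?_)
      (tendsto_atTop_add_const_left _ (f x)
        ((tendsto_atTop_add_const_right _ (-x) tendsto_id).const_mul_atTop hpos))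
    rw [id, ← sub_eq_add_neg]
    linarith [hlinear y hy]
  exact not_tendsto_nhds_of_tendsto_atTop this l hlim

theorem ae_comp_neg {p : ℝ → Prop} (h : ∀ᵐ x, p x) : ∀ᵐ x, p (-x) :=
  (Measure.measurePreserving_neg (volume : Measure ℝ)).quasiMeasurePreserving.ae h

structure IsAESolution (V φ : ℝ → ℝ) : Prop where
  differentiable : Differentiable ℝ φ
  locallyLipschitz_deriv : LocallyLipschitz (deriv φ)
  hasDerivAt_deriv : ∀ᵐ x, HasDerivAt (deriv φ) (V x * φ x) x

def wronskian (φ ψ : ℝ → ℝ) (x : ℝ) : ℝ := φ x * deriv ψ x - deriv φ x * ψ x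

namespace IsAESolution

variable {V φ ψ : ℝ → ℝ} {C : ℝ}

theorem hasDerivAt (h : IsAESolution V φ) (x : ℝ) : HasDerivAt φ (deriv φ x) x :=
  (h.differentiable x).hasDerivAt

theorem contDiff (h : IsAESolution V φ) : ContDiff ℝ 1 φ :=
  contDiff_one_iff_deriv.2 ⟨h.differentiable, h.locallyLipschitz_deriv.continuous⟩

theorem absolutelyContinuousOnInterval (h : IsAESolution V φ) (a b : ℝ) :
    AbsolutelyContinuousOnInterval φ a b :=
  h.contDiff.absolutelyContinuousOnInterval a b

theorem absolutelyContinuousOnInterval_deriv (h : IsAESolution V φ) (a b : ℝ) :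
    AbsolutelyContinuousOnInterval (deriv φ) a b :=
  h.locallyLipschitz_deriv.absolutelyContinuousOnInterval a b

theorem comp_neg (h : IsAESolution V φ) : IsAESolution (fun x => V (-x)) (fun x => φ (-x)) := by
  have hderiv : deriv (fun x => φ (-x)) = fun x => -deriv φ (-x) :=
    funext fun x => deriv_comp_neg φ x
  refine ⟨h.differentiable.comp differentiable_neg, ?_, ?_⟩
  · rw [hderiv]
    exact LipschitzWith.id.neg.locallyLipschitz.comp
      (h.locallyLipschitz_deriv.comp LipschitzWith.id.neg.locallyLipschitz)
  · filter_upwards [ae_comp_neg h.hasDerivAt_deriv] with x hx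
    rw [hderiv]
    simpa [mul_comm] using (hx.comp x (hasDerivAt_neg x)).fun_neg

theorem wronskian_eq (hφ : IsAESolution V φ) (hψ : IsAESolution V ψ) (x y : ℝ) :
    wronskian φ ψ x = wronskian φ ψ y := by
  have hac : AbsolutelyContinuousOnInterval (wronskian φ ψ) x y :=
    ((hφ.absolutelyContinuousOnInterval x y).mul
      (hψ.absolutelyContinuousOnInterval_deriv x y)).sub
    ((hφ.absolutelyContinuousOnInterval_deriv x y).mul (hψ.absolutelyContinuousOnInterval x y))
  obtain ⟨c, hc⟩ := hac.const_of_ae_hasDerivAt_zero (by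
    filter_upwards [hφ.hasDerivAt_deriv, hψ.hasDerivAt_deriv] with t hφ' hψ' _
    exact (((hφ.hasDerivAt t).mul hψ').sub (hφ'.mul (hψ.hasDerivAt t))).congr_deriv (by ring))
  rw [hc x left_mem_uIcc, hc y right_mem_uIcc]

theorem monotone_deriv (h : IsAESolution V φ) (hV : ∀ᵐ x, 0 ≤ V x) (hφ : ∀ x, 0 ≤ φ x) :
    Monotone (deriv φ) :=
  monotone_of_ae_hasDerivAt_nonneg h.absolutelyContinuousOnInterval_deriv h.hasDerivAt_deriv
    (hV.mono fun x hx => mul_nonneg hx (hφ x))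

theorem monotone_mul_deriv (h : IsAESolution V φ) (hV : ∀ᵐ x, 0 ≤ V x) :
    Monotone (fun x => φ x * deriv φ x) := by
  refine monotone_of_ae_hasDerivAt_nonneg (fun a b => (h.absolutelyContinuousOnInterval a b).mul
    (h.absolutelyContinuousOnInterval_deriv a b))
    (f' := fun x => deriv φ x * deriv φ x + φ x * (V x * φ x)) ?_ ?_
  · filter_upwards [h.hasDerivAt_deriv] with x hx using (h.hasDerivAt x).mul hx
  · filter_upwards [hV] with x hx
    nlinarith [mul_self_nonneg (deriv φ x), mul_nonneg hx (mul_self_nonneg (φ x))]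

/-- The energy `φ'² + φ²` has derivative `2 (V + 1) φ φ'`, bounded by `(C + 1)` times itself. -/
theorem eq_zero_of_eq_zero_of_deriv_eq_zero (h : IsAESolution V φ) (hV : ∀ᵐ x, V x ∈ Icc 0 C)
    {z : ℝ} (hz : φ z = 0) (hz' : deriv φ z = 0) (x : ℝ) : φ x = 0 := by
  have henergy := eq_zero_of_ae_abs_hasDerivAt_le (z := z) (L := C + 1)
    (F := fun x => deriv φ x * deriv φ x + φ x * φ x)
    (F' := fun x => 2 * (V x + 1) * φ x * deriv φ x)
    (fun a b => ((h.absolutelyContinuousOnInterval_deriv a b).mul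
      (h.absolutelyContinuousOnInterval_deriv a b)).add
      ((h.absolutelyContinuousOnInterval a b).mul (h.absolutelyContinuousOnInterval a b)))
    (by
      filter_upwards [h.hasDerivAt_deriv] with x hx
      exact ((hx.mul hx).add ((h.hasDerivAt x).mul (h.hasDerivAt x))).congr_deriv (by ring))
    (by
      filter_upwards [hV] with x hx
      rw [abs_le]
      constructor <;> nlinarith [hx.1, hx.2, mul_nonneg hx.1 (sq_nonneg (φ x + deriv φ x)),
        mul_nonneg hx.1 (sq_nonneg (φ x - deriv φ x)), sq_nonneg (φ x + deriv φ x),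
        sq_nonneg (φ x - deriv φ x), mul_nonneg (sub_nonneg.2 hx.2) (sq_nonneg (φ x)),
        mul_nonneg (sub_nonneg.2 hx.2) (sq_nonneg (deriv φ x))])
    (fun x => add_nonneg (mul_self_nonneg _) (mul_self_nonneg _)) (by simp [hz, hz']) x
  nlinarith [mul_self_nonneg (deriv φ x), mul_self_nonneg (φ x)]

theorem eq_zero_of_tendsto_atTop_of_eq_zero (h : IsAESolution V φ) (hV : ∀ᵐ x, 0 ≤ V x)
    (hlim : Tendsto φ atTop (𝓝 0)) {z : ℝ} (hz : φ z = 0) {y : ℝ} (hzy : z ≤ y) : φ y = 0 := by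
  have hderiv (x : ℝ) : HasDerivAt (fun x => φ x * φ x) (2 * (φ x * deriv φ x)) x :=
    ((h.hasDerivAt x).mul (h.hasDerivAt x)).congr_deriv (by ring)
  have hmono : MonotoneOn (fun x => φ x * φ x) (Ici z) := by
    refine monotoneOn_of_deriv_nonneg (convex_Ici z)
      (fun x _ => (hderiv x).continuousAt.continuousWithinAt)
      (fun x _ => (hderiv x).differentiableAt.differentiableWithinAt) fun x hx => ?_
    rw [interior_Ici] at hx
    have := h.monotone_mul_deriv hV (le_of_lt hx)
    rw [(hderiv x).deriv]
    simp only [hz, zero_mul] at this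
    linarith
  have hsq : φ y * φ y ≤ 0 := by
    refine ge_of_tendsto (by simpa using hlim.mul hlim) ?_
    filter_upwards [eventually_ge_atTop y] with t ht using hmono hzy (hzy.trans ht) ht
  nlinarith [mul_self_nonneg (φ y)]

theorem pos_of_tendsto_atTop (h : IsAESolution V φ) (hV : ∀ᵐ x, V x ∈ Icc 0 C)
    (hlim : Tendsto φ atTop (𝓝 0)) {a : ℝ} (ha : 0 < φ a) (x : ℝ) : 0 < φ x := by
  by_contra! hx
  obtain ⟨z, -, hz⟩ : ∃ z ∈ uIcc x a, φ z = 0 :=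
    intermediate_value_uIcc h.differentiable.continuous.continuousOn
      (mem_uIcc.2 (Or.inl ⟨hx, ha.le⟩))
  have hV0 : ∀ᵐ x, 0 ≤ V x := hV.mono fun x hx => hx.1
  have hvanish : φ =ᶠ[𝓝 (z + 1)] fun _ => 0 := by
    filter_upwards [Ioi_mem_nhds (lt_add_one z)] with y hy
    exact h.eq_zero_of_tendsto_atTop_of_eq_zero hV0 hlim hz (le_of_lt hy)
  have := h.eq_zero_of_eq_zero_of_deriv_eq_zero hV hvanish.eq_of_nhds
    (by rw [hvanish.deriv_eq, deriv_const]) a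
  linarith

end IsAESolution

section WronskianFormula

variable {f g : ℝ → ℝ} {w : ℝ}

theorem hasDerivAt_div_of_wronskian_eq (hf : Differentiable ℝ f) (hg : Differentiable ℝ g)
    (hfpos : ∀ x, 0 < f x) (hw : ∀ x, wronskian g f x = w) (x : ℝ) :
    HasDerivAt (fun x => g x / f x) (-(w * (f x ^ 2)⁻¹)) x := by
  refine ((hg x).hasDerivAt.div (hf x).hasDerivAt (hfpos x).ne').congr_deriv ?_
  rw [← hw x, wronskian]
  field_simp
  ring

theorem wronskian_mul_integral_Ioi_inv_sq (hf : Differentiable ℝ f) (hg : Differentiable ℝ g)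
    (hfpos : ∀ x, 0 < f x) (hw : ∀ x, wronskian g f x = w) (hw0 : 0 ≤ w)
    (hlim : Tendsto (fun x => g x / f x) atTop (𝓝 0)) (x : ℝ) :
    w * ∫ ξ in Ioi x, (f ξ ^ 2)⁻¹ = g x / f x := by
  have := integral_Ioi_of_hasDerivAt_of_nonpos' (a := x)
    (fun t _ => hasDerivAt_div_of_wronskian_eq hf hg hfpos hw t)
    (fun t _ => neg_nonpos.2 (mul_nonneg hw0 (by positivity))) hlim
  rw [integral_neg, integral_const_mul] at this
  linarith

theorem integrableOn_Ioi_inv_sq (hf : Differentiable ℝ f) (hg : Differentiable ℝ g)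
    (hfpos : ∀ x, 0 < f x) (hw : ∀ x, wronskian g f x = w) (hw0 : 0 < w)
    (hlim : Tendsto (fun x => g x / f x) atTop (𝓝 0)) (x : ℝ) :
    IntegrableOn (fun ξ => (f ξ ^ 2)⁻¹) (Ioi x) := by
  have := integrableOn_Ioi_deriv_of_nonpos' (a := x)
    (fun t _ => hasDerivAt_div_of_wronskian_eq hf hg hfpos hw t)
    (fun t _ => neg_nonpos.2 (mul_nonneg hw0.le (by positivity))) hlim
  simpa [IntegrableOn, hw0.ne'] using this.neg.const_mul w⁻¹

end WronskianFormula

section FundamentalSolutions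

variable {V φ φp φm : ℝ → ℝ} {C : ℝ}

theorem SolP.isAESolution (hp : SolP V φ) : IsAESolution V φ := ⟨hp.1, hp.2.1, hp.2.2.1⟩

theorem SolM.isAESolution (hm : SolM V φ) : IsAESolution V φ := ⟨hm.1, hm.2.1, hm.2.2.1⟩

theorem SolP.comp_neg (hp : SolP V φ) : SolM (fun x => V (-x)) (fun x => φ (-x)) :=
  have h := hp.isAESolution.comp_neg
  ⟨h.1, h.2, h.3, by simpa using hp.2.2.2.1, hp.2.2.2.2.comp tendsto_neg_atBot_atTop⟩

theorem SolM.comp_neg (hm : SolM V φ) : SolP (fun x => V (-x)) (fun x => φ (-x)) :=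
  have h := hm.isAESolution.comp_neg
  ⟨h.1, h.2, h.3, by simpa using hm.2.2.2.1, hm.2.2.2.2.comp tendsto_neg_atTop_atBot⟩

theorem SolP.pos (hp : SolP V φ) (hV : ∀ᵐ x, V x ∈ Icc 0 C) (x : ℝ) : 0 < φ x :=
  hp.isAESolution.pos_of_tendsto_atTop hV hp.2.2.2.2 (a := 0) (by simp [hp.2.2.2.1]) x

theorem SolM.pos (hm : SolM V φ) (hV : ∀ᵐ x, V x ∈ Icc 0 C) (x : ℝ) : 0 < φ x := by
  simpa using hm.comp_neg.pos (ae_comp_neg hV) (-x)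

theorem SolP.deriv_nonpos (hp : SolP V φ) (hV : ∀ᵐ x, V x ∈ Icc 0 C) (x : ℝ) :
    deriv φ x ≤ 0 :=
  deriv_nonpos_of_monotone_deriv_of_tendsto hp.1
    (hp.isAESolution.monotone_deriv (hV.mono fun _ hx => hx.1) fun y => (hp.pos hV y).le)
    hp.2.2.2.2 x

theorem SolM.deriv_nonneg (hm : SolM V φ) (hV : ∀ᵐ x, V x ∈ Icc 0 C) (x : ℝ) :
    0 ≤ deriv φ x := by
  simpa [deriv_comp_neg] using hm.comp_neg.deriv_nonpos (ae_comp_neg hV) (-x)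

theorem SolP.one_le (hp : SolP V φ) (hV : ∀ᵐ x, V x ∈ Icc 0 C) {x : ℝ} (hx : x ≤ 0) :
    1 ≤ φ x :=
  hp.2.2.2.1 ▸ antitone_of_deriv_nonpos hp.1 (hp.deriv_nonpos hV) hx

theorem SolM.one_le (hm : SolM V φ) (hV : ∀ᵐ x, V x ∈ Icc 0 C) {x : ℝ} (hx : 0 ≤ x) :
    1 ≤ φ x := by
  simpa using hm.comp_neg.one_le (ae_comp_neg hV) (neg_nonpos.2 hx)

theorem SolP.wronskian_eq (hp : SolP V φp) (hm : SolM V φm) (x : ℝ) :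
    wronskian φp φm x = deriv φm 0 - deriv φp 0 := by
  rw [hp.isAESolution.wronskian_eq hm.isAESolution x 0, wronskian, hp.2.2.2.1, hm.2.2.2.1]
  ring

theorem SolP.tendsto_div (hp : SolP V φp) (hm : SolM V φm) (hV : ∀ᵐ x, V x ∈ Icc 0 C) :
    Tendsto (fun x => φp x / φm x) atTop (𝓝 0) := by
  refine tendsto_of_tendsto_of_tendsto_of_le_of_le' tendsto_const_nhds hp.2.2.2.2 ?_ ?_
  · exact Eventually.of_forall fun y => div_nonneg (hp.pos hV y).le (hm.pos hV y).le
  · filter_upwards [eventually_ge_atTop 0] with y hy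
    exact div_le_self (hp.pos hV y).le (hm.one_le hV hy)

theorem SolM.wronskian_mul_integral_Ioi (hp : SolP V φp) (hm : SolM V φm)
    (hV : ∀ᵐ x, V x ∈ Icc 0 C) (x : ℝ) :
    (deriv φm 0 - deriv φp 0) * ∫ ξ in Ioi x, (φm ξ ^ 2)⁻¹ = φp x / φm x :=
  wronskian_mul_integral_Ioi_inv_sq hm.1 hp.1 (hm.pos hV) (hp.wronskian_eq hm)
    (by linarith [hp.deriv_nonpos hV 0, hm.deriv_nonneg hV 0]) (hp.tendsto_div hm hV) x

theorem SolP.wronskian_pos (hp : SolP V φp) (hm : SolM V φm) (hV : ∀ᵐ x, V x ∈ Icc 0 C) :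
    0 < deriv φm 0 - deriv φp 0 := by
  have h0 := SolM.wronskian_mul_integral_Ioi hp hm hV 0
  rw [hp.2.2.2.1, hm.2.2.2.1, div_one] at h0
  refine lt_of_le_of_ne (by linarith [hp.deriv_nonpos hV 0, hm.deriv_nonneg hV 0]) ?_
  intro hW
  rw [← hW, zero_mul] at h0
  exact zero_ne_one h0

theorem SolM.eq_mul_integral_Ici (hp : SolP V φp) (hm : SolM V φm) (hV : ∀ᵐ x, V x ∈ Icc 0 C)
    (x : ℝ) : IntegrableOn (fun ξ => (φm ξ ^ 2)⁻¹) (Ici x) ∧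
      φp x = (deriv φm 0 - deriv φp 0) * φm x * ∫ ξ in Ici x, (φm ξ ^ 2)⁻¹ := by
  refine ⟨(integrableOn_Ici_iff_integrableOn_Ioi).2 (integrableOn_Ioi_inv_sq hm.1 hp.1
    (hm.pos hV) (hp.wronskian_eq hm) (hp.wronskian_pos hm hV) (hp.tendsto_div hm hV) x), ?_⟩
  rw [integral_Ici_eq_integral_Ioi, mul_right_comm, SolM.wronskian_mul_integral_Ioi hp hm hV,
    div_mul_cancel₀ _ (hm.pos hV x).ne']

/-- Reflecting `x ↦ -x` swaps the roles of `φ₊` and `φ₋` and preserves the Wronskian. -/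
theorem SolP.eq_mul_integral_Iic (hp : SolP V φp) (hm : SolM V φm) (hV : ∀ᵐ x, V x ∈ Icc 0 C)
    (x : ℝ) : IntegrableOn (fun ξ => (φp ξ ^ 2)⁻¹) (Iic x) ∧
      φm x = (deriv φm 0 - deriv φp 0) * φp x * ∫ ξ in Iic x, (φp ξ ^ 2)⁻¹ := by
  obtain ⟨hint, heq⟩ := SolM.eq_mul_integral_Ici hm.comp_neg hp.comp_neg (ae_comp_neg hV) (-x)
  have hpre : (fun ξ : ℝ => -ξ) ⁻¹' Iic x = Ici (-x) := by ext; simp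
  refine ⟨((Measure.measurePreserving_neg volume).integrableOn_comp_preimage
    (Homeomorph.neg ℝ).measurableEmbedding).1 (hpre ▸ hint), ?_⟩
  rw [integral_Ici_eq_integral_Ioi, integral_comp_neg_Ioi (-x) fun t => (φp t ^ 2)⁻¹,
    deriv_comp_neg, deriv_comp_neg] at heq
  simp only [neg_neg, neg_zero] at heq
  rw [heq]
  ring

end FundamentalSolutions

theorem stmt18_general (V : ℝ → ℝ) (v0 v1 : ℝ) (h0 : 0 < v0)
    (hbd : ∀ᵐ x : ℝ ∂volume, v0 ≤ V x ∧ V x ≤ v1)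
    (φp φm : ℝ → ℝ) (hp : SolP V φp) (hm : SolM V φm) :
    0 < deriv φm 0 - deriv φp 0 ∧
    (∀ x : ℝ, φp x * deriv φm x - deriv φp x * φm x = deriv φm 0 - deriv φp 0) ∧
    (∀ x : ℝ, IntegrableOn (fun ξ => (φp ξ ^ 2)⁻¹) (Iic x) volume ∧
      IntegrableOn (fun ξ => (φm ξ ^ 2)⁻¹) (Ici x) volume) ∧
    (∀ x : ℝ, φm x = (deriv φm 0 - deriv φp 0) * φp x * ∫ ξ in Iic x, (φp ξ ^ 2)⁻¹) ∧
    (∀ x : ℝ, φp x = (deriv φm 0 - deriv φp 0) * φm x * ∫ ξ in Ici x, (φm ξ ^ 2)⁻¹) := by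
  have hV : ∀ᵐ x, V x ∈ Icc 0 v1 := hbd.mono fun x hx => ⟨h0.le.trans hx.1, hx.2⟩
  exact ⟨hp.wronskian_pos hm hV, hp.wronskian_eq hm,
    fun x => ⟨(hp.eq_mul_integral_Iic hm hV x).1, (SolM.eq_mul_integral_Ici hp hm hV x).1⟩,
    fun x => (hp.eq_mul_integral_Iic hm hV x).2, fun x => (SolM.eq_mul_integral_Ici hp hm hV x).2⟩

/-- the Wronskian `φ₊φ₋' − φ₊'φ₋` is constant, equal to
`W = φ₋'(0) − φ₊'(0) > 0`, the integrals `H₊(x) = ∫_{−∞}^x φ₊⁻²`, `H₋(x) = ∫_x^∞ φ₋⁻²`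
converge, and `φ₋ = W φ₊ H₊`, `φ₊ = W φ₋ H₋` on ℝ. -/
theorem stmt18 (V : ℝ → ℝ) (v0 v1 : ℝ) (hmeas : Measurable V) (h0 : 0 < v0)
    (hbd : ∀ᵐ x : ℝ ∂volume, v0 ≤ V x ∧ V x ≤ v1)
    (φp φm : ℝ → ℝ) (hp : SolP V φp) (hm : SolM V φm) :
    0 < deriv φm 0 - deriv φp 0 ∧
    (∀ x : ℝ, φp x * deriv φm x - deriv φp x * φm x = deriv φm 0 - deriv φp 0) ∧
    (∀ x : ℝ, IntegrableOn (fun ξ => (φp ξ ^ 2)⁻¹) (Iic x) volume ∧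
      IntegrableOn (fun ξ => (φm ξ ^ 2)⁻¹) (Ici x) volume) ∧
    (∀ x : ℝ, φm x = (deriv φm 0 - deriv φp 0) * φp x * ∫ ξ in Iic x, (φp ξ ^ 2)⁻¹) ∧
    (∀ x : ℝ, φp x = (deriv φm 0 - deriv φp 0) * φm x * ∫ ξ in Ici x, (φm ξ ^ 2)⁻¹) :=
  stmt18_general V v0 v1 h0 hbd φp φm hp hm
end
end
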